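/- arXiv:2406.04112 — 4 statements merged into one kernel-verified Lean document; each statement's English description precedes it below -/
import Mathlib

section
/- Let W_l(t) follow scaled-orthogonal initialization and the gradient-descent updates described in the context, and suppose rank(Φ) ≤ r with m := d − 2r > 0. Then there exist orthogonal d×d real matrices U_1,…,U_L and V_1,…,V_L satisfying V_{l+1} = U_l for each l ∈ {1,…,L−1}, such that for every l ∈ {1,…,L} and every t ≥ 0 there is a 2r×2r real matrix W̃_l(t) with W_l(t) = U_l · diag(W̃_l(t), ρ_l(t)·I_m) · V_lᵀ, where diag(A, B) denotes the d×d block-diagonal matrix with top-left block A and bottom-right block B, and moreover W̃_l(0) = ε_l·I_{2r}. -/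
open Matrix BigOperators Filter

noncomputable section

/-- Auxiliary: product of `k` consecutive matrices ending (on the right) at index `i`. -/
def chainAux {n : Type*} [Fintype n] [DecidableEq n]
    (W : ℕ → Matrix n n ℝ) (i : ℕ) : ℕ → Matrix n n ℝ
  | 0 => 1
  | (k+1) => W (i + k) * chainAux W i k

/-- `chain W i j = W j * W (j-1) * ⋯ * W i`; equals `1` when `j < i` (empty product). -/
def chain {n : Type*} [Fintype n] [DecidableEq n]
    (W : ℕ → Matrix n n ℝ) (i j : ℕ) : Matrix n n ℝ :=
  chainAux W i (j + 1 - i)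

/-- `blockDiag r m A B` is the `(2r+m)×(2r+m)` block-diagonal matrix `diag(A, B)`
with top-left block `A` (of size `2r×2r`) and bottom-right block `B` (of size `m×m`). -/
def blockDiag (r m : ℕ) (A : Matrix (Fin (2*r)) (Fin (2*r)) ℝ)
    (B : Matrix (Fin m) (Fin m) ℝ) : Matrix (Fin (2*r + m)) (Fin (2*r + m)) ℝ :=
  Matrix.reindex finSumFinEquiv finSumFinEquiv (Matrix.fromBlocks A 0 0 B)

/-- The `d×2r` matrix formed by the first `2r` columns of a `(2r+m)×(2r+m)` matrix. -/
def cols1 (r m : ℕ) (U : Matrix (Fin (2*r + m)) (Fin (2*r + m)) ℝ) :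
    Matrix (Fin (2*r + m)) (Fin (2*r)) ℝ :=
  fun i j => U i (Fin.castAdd m j)

/-- The `d×m` matrix formed by the last `m` columns of a `(2r+m)×(2r+m)` matrix. -/
def cols2 (r m : ℕ) (U : Matrix (Fin (2*r + m)) (Fin (2*r + m)) ℝ) :
    Matrix (Fin (2*r + m)) (Fin m) ℝ :=
  fun i j => U i (Fin.natAdd (2*r) j)

/-- Squared Frobenius norm: `‖A‖_F² = trace(AᵀA)`. -/
def frobSq {p q : Type*} [Fintype p] [Fintype q] (A : Matrix p q ℝ) : ℝ :=
  Matrix.trace (Aᵀ * A)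

/-- Frobenius norm: `‖A‖_F = √(trace(AᵀA))`. -/
def frobNorm {p q : Type*} [Fintype p] [Fintype q] (A : Matrix p q ℝ) : ℝ :=
  Real.sqrt (Matrix.trace (Aᵀ * A))

/-! Normalizing the initial layers gives orthogonal matrices `O_l = ε_l⁻¹ W_l(0)`. Since `Φ`
and `Φᵀ O_L ⋯ O_1` have rank at most `r`, their kernels meet in dimension at least
`d - 2r = m`, so some orthogonal `V` has its last `m` columns in both kernels; put
`U_l = O_l ⋯ O_1 V`. Gradient descent commutes with the change of frames
`W_l ↦ U_lᵀ W_l U_{l-1}`, and in the new frames the initial weights are `ε_l I` while `Φ` is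
block diagonal with vanishing bottom-right block. Block-diagonal matrices whose bottom-right
block is a multiple of the identity are closed under the products, transposes and differences
occurring in the update, and the multiples obey exactly the recursion defining `ρ`. -/

section BlockDiag

variable {r m : ℕ}

lemma blockDiag_mul_blockDiag (A A' : Matrix (Fin (2*r)) (Fin (2*r)) ℝ)
    (B B' : Matrix (Fin m) (Fin m) ℝ) :
    blockDiag r m A B * blockDiag r m A' B' = blockDiag r m (A * A') (B * B') := by
  simp [_root_.blockDiag, fromBlocks_multiply]

lemma transpose_blockDiag (A : Matrix (Fin (2*r)) (Fin (2*r)) ℝ)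
    (B : Matrix (Fin m) (Fin m) ℝ) :
    (blockDiag r m A B)ᵀ = blockDiag r m Aᵀ Bᵀ := by
  simp [_root_.blockDiag, fromBlocks_transpose]

lemma blockDiag_sub_blockDiag (A A' : Matrix (Fin (2*r)) (Fin (2*r)) ℝ)
    (B B' : Matrix (Fin m) (Fin m) ℝ) :
    blockDiag r m A B - blockDiag r m A' B' = blockDiag r m (A - A') (B - B') := by
  simp only [_root_.blockDiag, ← coe_reindexLinearEquiv ℝ ℝ]
  rw [← map_sub]
  simp only [sub_eq_add_neg, fromBlocks_neg, fromBlocks_add, neg_zero, add_zero]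

lemma smul_blockDiag (c : ℝ) (A : Matrix (Fin (2*r)) (Fin (2*r)) ℝ)
    (B : Matrix (Fin m) (Fin m) ℝ) :
    c • blockDiag r m A B = blockDiag r m (c • A) (c • B) := by
  simp only [_root_.blockDiag, ← coe_reindexLinearEquiv ℝ ℝ]
  rw [← map_smul]
  simp only [fromBlocks_smul, smul_zero]

lemma blockDiag_smul_one (c : ℝ) : blockDiag r m (c • 1) (c • 1) = c • 1 := by
  rw [← smul_blockDiag]
  simp [_root_.blockDiag, fromBlocks_one]

lemma cols2_mul (X Y : Matrix (Fin (2*r + m)) (Fin (2*r + m)) ℝ) :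
    cols2 r m (X * Y) = X * cols2 r m Y :=
  rfl

end BlockDiag

def IsBlockScalar (r m : ℕ) (s : ℝ) (M : Matrix (Fin (2*r + m)) (Fin (2*r + m)) ℝ) : Prop :=
  ∃ A, M = blockDiag r m A (s • 1)

namespace IsBlockScalar

variable {r m : ℕ} {s s' : ℝ} {M M' : Matrix (Fin (2*r + m)) (Fin (2*r + m)) ℝ}

lemma smul_one (c : ℝ) : IsBlockScalar r m c (c • 1) :=
  ⟨c • 1, (blockDiag_smul_one c).symm⟩

lemma mul (h : IsBlockScalar r m s M) (h' : IsBlockScalar r m s' M') :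
    IsBlockScalar r m (s * s') (M * M') := by
  obtain ⟨A, rfl⟩ := h
  obtain ⟨A', rfl⟩ := h'
  exact ⟨A * A', by rw [blockDiag_mul_blockDiag, smul_mul_smul_comm, one_mul]⟩

lemma transpose (h : IsBlockScalar r m s M) : IsBlockScalar r m s Mᵀ := by
  obtain ⟨A, rfl⟩ := h
  exact ⟨Aᵀ, by rw [transpose_blockDiag, transpose_smul, transpose_one]⟩

lemma sub (h : IsBlockScalar r m s M) (h' : IsBlockScalar r m s' M') :
    IsBlockScalar r m (s - s') (M - M') := by
  obtain ⟨A, rfl⟩ := h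
  obtain ⟨A', rfl⟩ := h'
  exact ⟨A - A', by rw [blockDiag_sub_blockDiag, sub_smul]⟩

lemma smul (c : ℝ) (h : IsBlockScalar r m s M) : IsBlockScalar r m (c * s) (c • M) := by
  obtain ⟨A, rfl⟩ := h
  exact ⟨c • A, by rw [smul_blockDiag, smul_smul]⟩

lemma of_cols2_eq_zero (h : cols2 r m M = 0) (hT : cols2 r m Mᵀ = 0) :
    IsBlockScalar r m 0 M := by
  refine ⟨M.submatrix (Fin.castAdd m) (Fin.castAdd m), ?_⟩
  ext i j
  obtain ⟨i, rfl⟩ := finSumFinEquiv.surjective i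
  obtain ⟨j, rfl⟩ := finSumFinEquiv.surjective j
  have h := congrFun₂ h
  have hT := congrFun₂ hT
  rcases i with i | i <;> rcases j with j | j <;> simp_all [_root_.blockDiag, cols2]

end IsBlockScalar

section Chain

variable {n : Type*} [Fintype n] [DecidableEq n]

lemma chain_eq_one (W : ℕ → Matrix n n ℝ) {i j : ℕ} (h : j < i) : chain W i j = 1 := by
  rw [chain, Nat.sub_eq_zero_of_le h, chainAux]

lemma chain_succ (W : ℕ → Matrix n n ℝ) {i j : ℕ} (h : i ≤ j + 1) :
    chain W i (j + 1) = W (j + 1) * chain W i j := by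
  rw [chain, chain, show j + 1 + 1 - i = (j + 1 - i) + 1 by omega, chainAux,
    show i + (j + 1 - i) = j + 1 by omega]

theorem chain_induction {P : ℕ → Matrix n n ℝ → Prop} (W : ℕ → Matrix n n ℝ) {i : ℕ}
    (hi : 1 ≤ i) (one : P (i - 1) 1)
    (succ : ∀ j, i ≤ j + 1 → P j (chain W i j) → P (j + 1) (W (j + 1) * chain W i j))
    {j : ℕ} (hj : i ≤ j + 1) : P j (chain W i j) := by
  induction j, (by omega : i - 1 ≤ j) using Nat.le_induction with
  | base => rwa [chain_eq_one W (by omega)]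
  | succ j hij ih => rw [chain_succ W (by omega)]; exact succ j (by omega) (ih (by omega))

lemma chain_mem {S : Submonoid (Matrix n n ℝ)} {W : ℕ → Matrix n n ℝ} {i j : ℕ} (hi : 1 ≤ i)
    (hW : ∀ k, i ≤ k → k ≤ j → W k ∈ S) : chain W i j ∈ S := by
  rcases lt_or_ge j i with hji | hij
  · rw [chain_eq_one W hji]
    exact S.one_mem
  refine chain_induction (P := fun k M => k ≤ j → M ∈ S) W hi (fun _ => S.one_mem)
    (fun k hk ih hkj => S.mul_mem (hW _ hk hkj) (ih (by omega))) (by omega) le_rfl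

lemma chain_conj {U : ℕ → Matrix n n ℝ} {L : ℕ} (hU : ∀ k ≤ L, U k ∈ orthogonalGroup n ℝ)
    (W : ℕ → Matrix n n ℝ) {i j : ℕ} (hi : 1 ≤ i) (hij : i ≤ j + 1) (hj : j ≤ L) :
    chain (fun k => (U k)ᵀ * W k * U (k - 1)) i j = (U j)ᵀ * chain W i j * U (i - 1) := by
  refine chain_induction (P := fun k M => k ≤ L →
      chain (fun k => (U k)ᵀ * W k * U (k - 1)) i k = (U k)ᵀ * M * U (i - 1))
    W hi (fun _ => ?_) (fun k hk ih hkL => ?_) hij hj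
  · rw [chain_eq_one _ (by omega), Matrix.mul_one,
      (mem_orthogonalGroup_iff' n ℝ).mp (hU _ (by omega))]
  · rw [chain_succ _ hk, ih (by omega), Nat.add_sub_cancel]
    simp only [Matrix.mul_assoc]
    rw [← Matrix.mul_assoc (U k), (mem_orthogonalGroup_iff n ℝ).mp (hU k (by omega)),
      Matrix.one_mul]

end Chain

lemma IsBlockScalar.chain {r m : ℕ} {W : ℕ → Matrix (Fin (2*r + m)) (Fin (2*r + m)) ℝ}
    {s : ℕ → ℝ} {i j : ℕ} (hi : 1 ≤ i) (hij : i ≤ j + 1)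
    (hW : ∀ k, i ≤ k → k ≤ j → IsBlockScalar r m (s k) (W k)) :
    IsBlockScalar r m (∏ k ∈ Finset.Icc i j, s k) (chain W i j) := by
  refine chain_induction
    (P := fun k M => k ≤ j → IsBlockScalar r m (∏ l ∈ Finset.Icc i k, s l) M)
    W hi (fun _ => ?_) (fun k hk ih hkj => ?_) hij le_rfl
  · rw [Finset.Icc_eq_empty_of_lt (by omega), Finset.prod_empty]
    simpa using smul_one (r := r) (m := m) 1
  · rw [Finset.prod_Icc_succ_top hk, mul_comm]
    exact (hW _ hk hkj).mul (ih (by omega))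

def IsGDTrajectory {n : Type*} [Fintype n] [DecidableEq n] (L : ℕ) (η lam : ℝ)
    (Φ : Matrix n n ℝ) (W : ℕ → ℕ → Matrix n n ℝ) : Prop :=
  ∀ t l, 1 ≤ l → l ≤ L →
    W (t+1) l = (1 - η * lam) • W t l
      - η • ((chain (W t) (l+1) L)ᵀ * (chain (W t) 1 L - Φ) * (chain (W t) 1 (l-1))ᵀ)

lemma IsGDTrajectory.conj {n : Type*} [Fintype n] [DecidableEq n] {L : ℕ} {η lam : ℝ}
    {Φ : Matrix n n ℝ} {W : ℕ → ℕ → Matrix n n ℝ} (hW : IsGDTrajectory L η lam Φ W)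
    {U : ℕ → Matrix n n ℝ} (hU : ∀ k ≤ L, U k ∈ orthogonalGroup n ℝ) :
    IsGDTrajectory L η lam ((U L)ᵀ * Φ * U 0) (fun t l => (U l)ᵀ * W t l * U (l - 1)) := by
  intro t l hl hlL
  have cancel (k : ℕ) (hk : k ≤ L) (A : Matrix n n ℝ) : A * U k * (U k)ᵀ = A := by
    rw [Matrix.mul_assoc, (mem_orthogonalGroup_iff n ℝ).mp (hU k hk), Matrix.mul_one]
  have grad (X Y Z : Matrix n n ℝ) :
      ((U L)ᵀ * X * U l)ᵀ * ((U L)ᵀ * Y * U 0 - (U L)ᵀ * Φ * U 0) * ((U (l - 1))ᵀ * Z * U 0)ᵀ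
        = (U l)ᵀ * (Xᵀ * (Y - Φ) * Zᵀ) * U (l - 1) := by
    rw [← Matrix.sub_mul, ← Matrix.mul_sub]
    simp only [transpose_mul, transpose_transpose, ← Matrix.mul_assoc, cancel L le_rfl,
      cancel 0 (Nat.zero_le L)]
  simp only [chain_conj hU (W t) (by omega : 1 ≤ l + 1) (by omega) le_rfl,
    chain_conj hU (W t) le_rfl (by omega) le_rfl,
    chain_conj hU (W t) le_rfl (by omega) (by omega : l - 1 ≤ L), Nat.add_sub_cancel,
    Nat.sub_self]
  rw [grad, hW t l hl hlL, Matrix.mul_sub, Matrix.sub_mul, Matrix.mul_smul, Matrix.smul_mul,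
    Matrix.mul_smul, Matrix.smul_mul]

lemma prod_erase_Icc_one {M : Type*} [CommMonoid M] (f : ℕ → M) {l L : ℕ} (hl : 1 ≤ l)
    (hlL : l ≤ L) :
    ∏ k ∈ (Finset.Icc 1 L).erase l, f k
      = (∏ k ∈ Finset.Icc 1 (l - 1), f k) * ∏ k ∈ Finset.Icc (l + 1) L, f k := by
  rw [← Finset.prod_union (Finset.disjoint_left.mpr fun k hk hk' => by
    simp only [Finset.mem_Icc] at hk hk'; omega)]
  congr 1
  ext k
  simp only [Finset.mem_erase, Finset.mem_Icc, Finset.mem_union]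
  omega

theorem IsGDTrajectory.isBlockScalar {r m L : ℕ} {η lam : ℝ}
    {Φ : Matrix (Fin (2*r + m)) (Fin (2*r + m)) ℝ}
    {W : ℕ → ℕ → Matrix (Fin (2*r + m)) (Fin (2*r + m)) ℝ} {ρ : ℕ → ℕ → ℝ}
    (hW : IsGDTrajectory L η lam Φ W) (hΦ : IsBlockScalar r m 0 Φ)
    (hW0 : ∀ l, 1 ≤ l → l ≤ L → IsBlockScalar r m (ρ 0 l) (W 0 l))
    (hρ : ∀ t l, ρ (t+1) l
      = ρ t l * (1 - η * lam - η * ∏ k ∈ (Finset.Icc 1 L).erase l, (ρ t k)^2))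
    (t : ℕ) : ∀ l, 1 ≤ l → l ≤ L → IsBlockScalar r m (ρ t l) (W t l) := by
  induction t with
  | zero => exact hW0
  | succ t ih =>
    intro l hl hlL
    have hchain {i j : ℕ} (hi : 1 ≤ i) (hij : i ≤ j + 1) (hj : j ≤ L) :=
      IsBlockScalar.chain (s := ρ t) hi hij fun k hik hkj => ih k (by omega) (by omega)
    have hstep := ((ih l hl hlL).smul (1 - η * lam)).sub
      ((((hchain (by omega : 1 ≤ l + 1) (by omega) le_rfl).transpose.mul
        ((hchain le_rfl (by omega) le_rfl).sub hΦ)).mul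
          (hchain le_rfl (by omega) (by omega : l - 1 ≤ L)).transpose).smul η)
    rw [hW t l hl hlL]
    convert hstep using 1
    rw [hρ, Finset.prod_pow, ← Finset.mul_prod_erase _ _ (Finset.mem_Icc.mpr ⟨hl, hlL⟩),
      prod_erase_Icc_one _ hl hlL]
    ring

section Orthogonal

variable {n : Type*} [Fintype n] [DecidableEq n]

lemma inv_smul_mem_orthogonalGroup {M : Matrix n n ℝ} {c : ℝ} (hc : c ≠ 0)
    (hM : M * Mᵀ = c ^ 2 • 1) : c⁻¹ • M ∈ orthogonalGroup n ℝ := by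
  rw [mem_orthogonalGroup_iff, transpose_smul, smul_mul_smul_comm, hM, smul_smul]
  field_simp
  exact one_smul ℝ 1

lemma eq_mul_mul_transpose_of_mem_orthogonalGroup {U V : Matrix n n ℝ}
    (hU : U ∈ orthogonalGroup n ℝ) (hV : V ∈ orthogonalGroup n ℝ) (M : Matrix n n ℝ) :
    M = U * (Uᵀ * M * V) * Vᵀ := by
  rw [Matrix.mul_assoc, Matrix.mul_assoc, (mem_orthogonalGroup_iff n ℝ).mp hV, Matrix.mul_one,
    ← Matrix.mul_assoc, (mem_orthogonalGroup_iff n ℝ).mp hU, Matrix.one_mul]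

lemma card_le_finrank_ker_inf_ker_add_rank (A B : Matrix n n ℝ) :
    Fintype.card n ≤ Module.finrank ℝ
      ↥(LinearMap.ker (toEuclideanLin A) ⊓ LinearMap.ker (toEuclideanLin B)) + A.rank + B.rank := by
  have rank_eq (M : Matrix n n ℝ) :
      M.rank = Module.finrank ℝ (LinearMap.range (toEuclideanLin M)) :=
    rank_eq_finrank_range_toLin M (PiLp.basisFun 2 ℝ n) (PiLp.basisFun 2 ℝ n)
  have hA := LinearMap.finrank_range_add_finrank_ker (toEuclideanLin A)
  have hB := LinearMap.finrank_range_add_finrank_ker (toEuclideanLin B)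
  have hsup := Submodule.finrank_sup_add_finrank_inf_eq (LinearMap.ker (toEuclideanLin A))
    (LinearMap.ker (toEuclideanLin B))
  have hle := Submodule.finrank_le
    (LinearMap.ker (toEuclideanLin A) ⊔ LinearMap.ker (toEuclideanLin B))
  rw [finrank_euclideanSpace] at hA hB hle
  rw [rank_eq A, rank_eq B]
  omega

end Orthogonal

lemma exists_mem_orthogonalGroup_cols2_mem {r m : ℕ}
    (K : Submodule ℝ (EuclideanSpace ℝ (Fin (2*r + m)))) (hK : m ≤ Module.finrank ℝ K) :
    ∃ V ∈ orthogonalGroup (Fin (2*r + m)) ℝ,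
      ∀ j, WithLp.toLp 2 (fun i => cols2 r m V i j) ∈ K := by
  let w : Fin m → EuclideanSpace ℝ (Fin (2*r + m)) :=
    K.subtypeₗᵢ ∘ stdOrthonormalBasis ℝ K ∘ Fin.castLE hK
  have hw : Orthonormal ℝ w :=
    ((stdOrthonormalBasis ℝ K).orthonormal.comp _ (Fin.castLE_injective hK)).comp_linearIsometry
      K.subtypeₗᵢ
  let e := Equiv.ofInjective _ (Fin.natAdd_injective m (2*r))
  let v : Fin (2*r + m) → EuclideanSpace ℝ (Fin (2*r + m)) := Fin.addCases (fun _ => 0) w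
  have hv : Orthonormal ℝ ((Set.range (Fin.natAdd (2*r))).domRestrict v) := by
    have hve : (Set.range (Fin.natAdd (2*r))).domRestrict v ∘ e = w := by
      funext j; simp [v, e]
    have h := (hve ▸ hw).comp e.symm e.symm.injective
    rwa [Function.comp_assoc, Equiv.self_comp_symm, Function.comp_id] at h
  obtain ⟨b, hb⟩ := hv.exists_orthonormalBasis_extension_of_card_eq (by simp)
  let V := (EuclideanSpace.basisFun _ ℝ).toBasis.toMatrix b
  refine ⟨V, (EuclideanSpace.basisFun _ ℝ).toMatrix_orthonormalBasis_mem_orthogonal b,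
    fun j => ?_⟩
  have hcol : WithLp.toLp 2 (fun i => cols2 r m V i j) = b (Fin.natAdd (2*r) j) := by
    ext i; simp [V, cols2, Module.Basis.toMatrix_apply]
  rw [hcol, hb _ ⟨j, rfl⟩]
  simp [v, w]

lemma exists_mem_orthogonalGroup_mul_cols2_eq_zero {r m : ℕ}
    (A B : Matrix (Fin (2*r + m)) (Fin (2*r + m)) ℝ) (hA : A.rank ≤ r) (hB : B.rank ≤ r) :
    ∃ V ∈ orthogonalGroup (Fin (2*r + m)) ℝ, A * cols2 r m V = 0 ∧ B * cols2 r m V = 0 := by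
  have hK := card_le_finrank_ker_inf_ker_add_rank A B
  rw [Fintype.card_fin] at hK
  obtain ⟨V, hV, hcols⟩ := exists_mem_orthogonalGroup_cols2_mem
    (LinearMap.ker (toEuclideanLin A) ⊓ LinearMap.ker (toEuclideanLin B)) (by omega)
  have mul_cols2 {M : Matrix (Fin (2*r + m)) (Fin (2*r + m)) ℝ}
      (hM : ∀ j, WithLp.toLp 2 (fun i => cols2 r m V i j) ∈ LinearMap.ker (toEuclideanLin M)) :
      M * cols2 r m V = 0 := by
    ext a j
    simpa [mul_apply, mulVec, dotProduct] using congr_arg (· a) (hM j)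
  exact ⟨V, hV, mul_cols2 fun j => (hcols j).1, mul_cols2 fun j => (hcols j).2⟩

lemma exists_orthogonal_frames {r m L : ℕ} {Φ : Matrix (Fin (2*r + m)) (Fin (2*r + m)) ℝ}
    (hΦ : Φ.rank ≤ r) {ε : ℕ → ℝ} (hε : ∀ l, 1 ≤ l → l ≤ L → ε l ≠ 0)
    {W₀ : ℕ → Matrix (Fin (2*r + m)) (Fin (2*r + m)) ℝ}
    (hW₀ : ∀ l, 1 ≤ l → l ≤ L → W₀ l * (W₀ l)ᵀ = ε l ^ 2 • 1) :
    ∃ U : ℕ → Matrix (Fin (2*r + m)) (Fin (2*r + m)) ℝ,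
      (∀ l ≤ L, U l ∈ orthogonalGroup _ ℝ) ∧
      (∀ l, 1 ≤ l → l ≤ L → (U l)ᵀ * W₀ l * U (l - 1) = ε l • 1) ∧
      IsBlockScalar r m 0 ((U L)ᵀ * Φ * U 0) := by
  set O := fun l => (ε l)⁻¹ • W₀ l
  have hO : ∀ l, 1 ≤ l → l ≤ L → O l ∈ orthogonalGroup _ ℝ := fun l hl hlL =>
    inv_smul_mem_orthogonalGroup (hε l hl hlL) (hW₀ l hl hlL)
  obtain ⟨V, hV, hΦV, hΦOV⟩ := exists_mem_orthogonalGroup_mul_cols2_eq_zero Φ (Φᵀ * chain O 1 L)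
    hΦ ((rank_mul_le_left _ _).trans ((rank_transpose Φ).trans_le hΦ))
  have hU : ∀ l ≤ L, chain O 1 l * V ∈ orthogonalGroup _ ℝ := fun l hl =>
    mul_mem (chain_mem le_rfl fun k hk hkl => hO k hk (hkl.trans hl)) hV
  refine ⟨fun l => chain O 1 l * V, hU, fun l hl hlL => ?_, .of_cols2_eq_zero ?_ ?_⟩
  · obtain ⟨k, rfl⟩ : ∃ k, l = k + 1 := ⟨l - 1, by omega⟩
    have hWO : W₀ (k + 1) = ε (k + 1) • O (k + 1) := by simp [O, smul_smul, hε _ hl hlL]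
    rw [hWO, Nat.add_sub_cancel, Matrix.mul_smul, Matrix.smul_mul, Matrix.mul_assoc,
      ← Matrix.mul_assoc (O _), ← chain_succ O (by omega),
      (mem_orthogonalGroup_iff' _ ℝ).mp (hU _ hlL)]
  · dsimp only
    rw [chain_eq_one O zero_lt_one, Matrix.one_mul, cols2_mul, Matrix.mul_assoc, hΦV,
      Matrix.mul_zero]
  · simp only [chain_eq_one O zero_lt_one, Matrix.one_mul, transpose_mul, transpose_transpose,
      cols2_mul, Matrix.mul_assoc]
    rw [← Matrix.mul_assoc Φᵀ, hΦOV, Matrix.mul_zero]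

/-- `W t l` is `W_l(t)`, and `d = 2*r + m`. -/
theorem statement0_general
    (r m : ℕ) (L : ℕ)
    (Φ : Matrix (Fin (2*r + m)) (Fin (2*r + m)) ℝ) (hΦ : Φ.rank ≤ r)
    (ε : ℕ → ℝ) (hε : ∀ l, 1 ≤ l → l ≤ L → 0 < ε l)
    (η lam : ℝ)
    (W : ℕ → ℕ → Matrix (Fin (2*r + m)) (Fin (2*r + m)) ℝ)
    (hW0 : ∀ l, 1 ≤ l → l ≤ L →
      W 0 l * (W 0 l)ᵀ = (ε l)^2 • (1 : Matrix (Fin (2*r + m)) (Fin (2*r + m)) ℝ) ∧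
      (W 0 l)ᵀ * W 0 l = (ε l)^2 • (1 : Matrix (Fin (2*r + m)) (Fin (2*r + m)) ℝ))
    (hWupd : ∀ t l, 1 ≤ l → l ≤ L →
      W (t+1) l = (1 - η * lam) • W t l
        - η • ((chain (W t) (l+1) L)ᵀ * (chain (W t) 1 L - Φ) * (chain (W t) 1 (l-1))ᵀ))
    (ρ : ℕ → ℕ → ℝ)
    (hρ0 : ∀ l, ρ 0 l = ε l)
    (hρ : ∀ t l, ρ (t+1) l
      = ρ t l * (1 - η * lam - η * ∏ k ∈ (Finset.Icc 1 L).erase l, (ρ t k)^2)) :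
    ∃ U V : ℕ → Matrix (Fin (2*r + m)) (Fin (2*r + m)) ℝ,
      (∀ l, 1 ≤ l → l ≤ L →
        ((U l)ᵀ * U l = 1 ∧ U l * (U l)ᵀ = 1) ∧ ((V l)ᵀ * V l = 1 ∧ V l * (V l)ᵀ = 1)) ∧
      (∀ l, 1 ≤ l → l + 1 ≤ L → V (l+1) = U l) ∧
      (∀ l, 1 ≤ l → l ≤ L → ∀ t : ℕ,
        ∃ Wtil : Matrix (Fin (2*r)) (Fin (2*r)) ℝ,
          W t l = U l * blockDiag r m Wtil (ρ t l • 1) * (V l)ᵀ ∧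
          (t = 0 → Wtil = ε l • 1)) := by
  obtain ⟨U, hU, hW0U, hΦU⟩ := exists_orthogonal_frames hΦ (fun l hl hlL => (hε l hl hlL).ne')
    (fun l hl hlL => (hW0 l hl hlL).1)
  have orth (l : ℕ) (hl : l ≤ L) : (U l)ᵀ * U l = 1 ∧ U l * (U l)ᵀ = 1 :=
    ⟨(mem_orthogonalGroup_iff' _ ℝ).mp (hU l hl), (mem_orthogonalGroup_iff _ ℝ).mp (hU l hl)⟩
  have hblock := ((show IsGDTrajectory L η lam Φ W from hWupd).conj hU).isBlockScalar hΦU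
    (fun l hl hlL => hρ0 l ▸ hW0U l hl hlL ▸ .smul_one _) hρ
  refine ⟨U, fun l => U (l - 1), fun l _ hlL => ⟨orth l hlL, orth (l - 1) (by omega)⟩,
    fun l _ _ => by simp, fun l hl hlL t => ?_⟩
  have hWt := eq_mul_mul_transpose_of_mem_orthogonalGroup (hU l hlL) (hU (l - 1) (by omega)) (W t l)
  cases t with
  | zero => exact ⟨ε l • 1, by rw [hWt, hW0U l hl hlL, hρ0, blockDiag_smul_one], fun _ => rfl⟩
  | succ t =>
    obtain ⟨A, hA⟩ := hblock (t + 1) l hl hlL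
    exact ⟨A, hA ▸ hWt, nofun⟩

/-- Theorem 1: invariant low-dimensional subspaces for deep matrix
factorization trained by gradient descent from scaled orthogonal initialization.
Here `d = 2*r + m` with `m > 0`, layers are indexed by `l ∈ {1,…,L}`, and `W t l`
denotes `W_l(t)`. -/
theorem statement0
    (r m : ℕ) (hm : 0 < m) (L : ℕ) (hL : 1 ≤ L)
    (Φ : Matrix (Fin (2*r + m)) (Fin (2*r + m)) ℝ) (hΦ : Φ.rank ≤ r)
    (ε : ℕ → ℝ) (hε : ∀ l, 1 ≤ l → l ≤ L → 0 < ε l)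
    (η lam : ℝ) (hη : 0 < η) (hlam : 0 ≤ lam)
    (W : ℕ → ℕ → Matrix (Fin (2*r + m)) (Fin (2*r + m)) ℝ)
    (hW0 : ∀ l, 1 ≤ l → l ≤ L →
      W 0 l * (W 0 l)ᵀ = (ε l)^2 • (1 : Matrix (Fin (2*r + m)) (Fin (2*r + m)) ℝ) ∧
      (W 0 l)ᵀ * W 0 l = (ε l)^2 • (1 : Matrix (Fin (2*r + m)) (Fin (2*r + m)) ℝ))
    (hWupd : ∀ t l, 1 ≤ l → l ≤ L →
      W (t+1) l = (1 - η * lam) • W t l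
        - η • ((chain (W t) (l+1) L)ᵀ * (chain (W t) 1 L - Φ) * (chain (W t) 1 (l-1))ᵀ))
    (ρ : ℕ → ℕ → ℝ)
    (hρ0 : ∀ l, ρ 0 l = ε l)
    (hρ : ∀ t l, ρ (t+1) l
      = ρ t l * (1 - η * lam - η * ∏ k ∈ (Finset.Icc 1 L).erase l, (ρ t k)^2)) :
    ∃ U V : ℕ → Matrix (Fin (2*r + m)) (Fin (2*r + m)) ℝ,
      (∀ l, 1 ≤ l → l ≤ L →
        ((U l)ᵀ * U l = 1 ∧ U l * (U l)ᵀ = 1) ∧ ((V l)ᵀ * V l = 1 ∧ V l * (V l)ᵀ = 1)) ∧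
      (∀ l, 1 ≤ l → l + 1 ≤ L → V (l+1) = U l) ∧
      (∀ l, 1 ≤ l → l ≤ L → ∀ t : ℕ,
        ∃ Wtil : Matrix (Fin (2*r)) (Fin (2*r)) ℝ,
          W t l = U l * blockDiag r m Wtil (ρ t l • 1) * (V l)ᵀ ∧
          (t = 0 → Wtil = ε l • 1)) :=
  statement0_general r m L Φ hΦ ε hε η lam W hW0 hWupd ρ hρ0 hρ
end
end

section
/- Suppose U_1,…,U_L and V_1,…,V_L are orthogonal d×d real matrices with V_{l+1} = U_l for l ∈ {1,…,L−1} such that for every t ≥ 0 and every l ∈ {1,…,L}, U_lᵀ·W_l(t)·V_l = diag(W̃_l(t), ρ_l(t)·I_m) for some 2r×2r real matrix W̃_l(t) with W̃_l(0) = ε_l·I_{2r}. Write U_{L,1} for the first 2r columns of U_L and V_{1,1} for the first 2r columns of V_1. Define compressed iterates Ŵ_l(t) ∈ ℝ^{2r×2r} by Ŵ_l(0) := ε_l·I_{2r} and Ŵ_l(t+1) := (1 − ηλ)·Ŵ_l(t) − η·Ŵ_{L:l+1}(t)ᵀ·(Ŵ_{L:1}(t) − U_{L,1}ᵀ·Φ·V_{1,1})·Ŵ_{l−1:1}(t)ᵀ,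 where Ŵ_{j:i}(t) := Ŵ_j(t)⋯Ŵ_i(t) with empty products equal to I_{2r}. Assume in addition that η·(λ + ∏_{k≠l} ε_k²) ≤ 1 for every l ∈ {1,…,L}. Then for every t ≥ 0, ‖W_{L:1}(t) − U_{L,1}·Ŵ_{L:1}(t)·V_{1,1}ᵀ‖_F² ≤ m·∏_{l=1}^L ε_l², where ‖·‖_F denotes the Frobenius norm. -/
open Matrix BigOperators Filter

noncomputable section

/-!
Conjugating by the orthogonal factors turns every `W_l(t)` into `diag(W̃_l(t), ρ_l(t) I_m)`, and
since `V_{l+1} = U_l` the inner factors cancel in the end-to-end product and in the gradient. As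
block-diagonal matrices multiply blockwise, the top-left blocks `W̃_l` run exactly the compressed
gradient descent, so `W̃_l = Ŵ_l`. The error `W_{L:1} - U_{L,1} Ŵ_{L:1} V_{1,1}ᵀ` is therefore
`∏ ρ_l` times a product of two matrices with `m` orthonormal columns, of squared Frobenius norm
`m (∏ ρ_l)²`; the step-size condition keeps each factor of the scalar recursion for `ρ_l` in
`[0, 1]`, so `ρ_l(t)² ≤ ε_l²`.
-/

namespace DeepLinearCompression

section Chain

variable {n : Type*} [Fintype n] [DecidableEq n]

lemma chain_self (W : ℕ → Matrix n n ℝ) (i : ℕ) : chain W i i = W i := by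
  simp [chain, chainAux]

lemma chain_of_lt (W : ℕ → Matrix n n ℝ) {i j : ℕ} (h : j < i) : chain W i j = 1 := by
  simp [chain, Nat.sub_eq_zero_of_le h, chainAux]

lemma chain_succ (W : ℕ → Matrix n n ℝ) {i j : ℕ} (h : i ≤ j + 1) :
    chain W i (j + 1) = W (j + 1) * chain W i j := by
  rw [chain, chain, show j + 1 + 1 - i = (j + 1 - i) + 1 by omega, chainAux,
    show i + (j + 1 - i) = j + 1 by omega]

lemma chain_congr {W W' : ℕ → Matrix n n ℝ} {i j : ℕ}
    (h : ∀ k, i ≤ k → k ≤ j → W k = W' k) : chain W i j = chain W' i j := by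
  induction j with
  | zero =>
    rcases Nat.eq_zero_or_pos i with rfl | hi
    · rw [chain_self, chain_self, h 0 le_rfl le_rfl]
    · rw [chain_of_lt W hi, chain_of_lt W' hi]
  | succ j ih =>
    rcases lt_or_ge (j + 1) i with hj | hj
    · rw [chain_of_lt W hj, chain_of_lt W' hj]
    · rw [chain_succ W (by omega), chain_succ W' (by omega), h (j + 1) hj le_rfl,
        ih fun k hk hkj => h k hk (by omega)]

lemma chain_smul_one (c : ℕ → ℝ) (i j : ℕ) :
    chain (fun k => c k • (1 : Matrix n n ℝ)) i j = (∏ k ∈ Finset.Icc i j, c k) • 1 := by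
  have hAux : ∀ s, chainAux (fun k => c k • (1 : Matrix n n ℝ)) i s
      = (∏ a ∈ Finset.range s, c (i + a)) • 1 := by
    intro s
    induction s with
    | zero => simp [chainAux]
    | succ s ih =>
      rw [chainAux, ih, Finset.prod_range_succ, smul_mul_smul, Matrix.one_mul, mul_comm]
  rw [chain, hAux, ← Finset.Ico_add_one_right_eq_Icc, Finset.prod_Ico_eq_prod_range]

/-- The gradient of `½‖W_{L:1} - Φ‖_F²` with respect to the `l`-th factor. -/
def lossGrad (W : ℕ → Matrix n n ℝ) (Φ : Matrix n n ℝ) (L l : ℕ) : Matrix n n ℝ :=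
  (chain W (l + 1) L)ᵀ * (chain W 1 L - Φ) * (chain W 1 (l - 1))ᵀ

lemma lossGrad_congr {W W' : ℕ → Matrix n n ℝ} (Φ : Matrix n n ℝ) {L l : ℕ}
    (h : ∀ k, 1 ≤ k → k ≤ L → W k = W' k) (hl : l ≤ L) :
    lossGrad W Φ L l = lossGrad W' Φ L l := by
  rw [lossGrad, lossGrad, chain_congr fun k hk hkL => h k (by omega) hkL,
    chain_congr fun k hk hkL => h k hk hkL, chain_congr fun k hk hkl => h k hk (by omega)]

lemma gradientDescent_unique {X Y : ℕ → ℕ → Matrix n n ℝ} {a η : ℝ} {Ψ : Matrix n n ℝ}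
    {L : ℕ} (hX : ∀ t l, 1 ≤ l → l ≤ L → X (t + 1) l = a • X t l - η • lossGrad (X t) Ψ L l)
    (hY : ∀ t l, 1 ≤ l → l ≤ L → Y (t + 1) l = a • Y t l - η • lossGrad (Y t) Ψ L l)
    (h0 : ∀ l, 1 ≤ l → l ≤ L → X 0 l = Y 0 l) :
    ∀ t l, 1 ≤ l → l ≤ L → X t l = Y t l := by
  intro t
  induction t with
  | zero => exact h0
  | succ t ih =>
    intro l hl hlL
    rw [hX t l hl hlL, hY t l hl hlL, ih l hl hlL, lossGrad_congr Ψ ih hlL]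

structure AlignedFactorization (W U D V : ℕ → Matrix n n ℝ) (L : ℕ) : Prop where
  eq : ∀ k, 1 ≤ k → k ≤ L → W k = U k * D k * (V k)ᵀ
  orthonormal : ∀ k, 1 ≤ k → k ≤ L → (U k)ᵀ * U k = 1
  link : ∀ k, 1 ≤ k → k + 1 ≤ L → V (k + 1) = U k

namespace AlignedFactorization

variable {W U D V : ℕ → Matrix n n ℝ} {L : ℕ}

lemma chain_eq (h : AlignedFactorization W U D V L) {i j : ℕ} (hi : 1 ≤ i) (hij : i ≤ j)
    (hj : j ≤ L) : chain W i j = U j * chain D i j * (V i)ᵀ := by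
  induction j, hij using Nat.le_induction with
  | base => rw [chain_self, chain_self, h.eq i hi hj]
  | succ j hij ih =>
    rw [chain_succ W (by omega), chain_succ D (by omega), ih (by omega),
      h.eq (j + 1) (by omega) hj, h.link j (by omega) hj]
    calc U (j + 1) * D (j + 1) * (U j)ᵀ * (U j * chain D i j * (V i)ᵀ)
        = U (j + 1) * D (j + 1) * ((U j)ᵀ * U j) * chain D i j * (V i)ᵀ := by
          simp only [Matrix.mul_assoc]
      _ = _ := by
          rw [h.orthonormal j (by omega) (by omega)]
          simp only [Matrix.mul_one, Matrix.mul_assoc]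

lemma chain_mul_left (h : AlignedFactorization W U D V L) {l : ℕ} (hl : 1 ≤ l) (hlL : l ≤ L) :
    chain W (l + 1) L * U l = U L * chain D (l + 1) L := by
  rcases hlL.eq_or_lt with rfl | hlt
  · rw [chain_of_lt W (by omega), chain_of_lt D (by omega), Matrix.one_mul, Matrix.mul_one]
  · rw [h.chain_eq (by omega) hlt le_rfl, h.link l hl hlt, Matrix.mul_assoc,
      h.orthonormal l hl hlL, Matrix.mul_one]

lemma transpose_mul_chain (h : AlignedFactorization W U D V L) {l : ℕ} (hl : 1 ≤ l)
    (hlL : l ≤ L) : (V l)ᵀ * chain W 1 (l - 1) = chain D 1 (l - 1) * (V 1)ᵀ := by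
  rcases hl.eq_or_lt with rfl | hlt
  · rw [chain_of_lt W (by omega), chain_of_lt D (by omega), Matrix.one_mul, Matrix.mul_one]
  · obtain ⟨k, rfl⟩ : ∃ k, l = k + 2 := ⟨l - 2, by omega⟩
    rw [show k + 2 - 1 = k + 1 by omega, h.link (k + 1) (by omega) (by omega),
      h.chain_eq le_rfl (by omega) (by omega), ← Matrix.mul_assoc, ← Matrix.mul_assoc,
      h.orthonormal (k + 1) (by omega) (by omega), Matrix.one_mul]

lemma lossGrad_eq (h : AlignedFactorization W U D V L) (hV : (V 1)ᵀ * V 1 = 1)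
    (Φ : Matrix n n ℝ) {l : ℕ} (hl : 1 ≤ l) (hlL : l ≤ L) :
    (U l)ᵀ * lossGrad W Φ L l * V l = lossGrad D ((U L)ᵀ * Φ * V 1) L l := by
  have hmid : (U L)ᵀ * (chain W 1 L - Φ) * V 1 = chain D 1 L - (U L)ᵀ * Φ * V 1 := by
    rw [h.chain_eq le_rfl (by omega) le_rfl, Matrix.mul_sub, Matrix.sub_mul]
    congr 1
    calc (U L)ᵀ * (U L * chain D 1 L * (V 1)ᵀ) * V 1
        = ((U L)ᵀ * U L) * chain D 1 L * ((V 1)ᵀ * V 1) := by simp only [Matrix.mul_assoc]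
      _ = chain D 1 L := by
          rw [h.orthonormal L (by omega) le_rfl, hV, Matrix.one_mul, Matrix.mul_one]
  have hleft := congrArg Matrix.transpose (h.chain_mul_left hl hlL)
  have hright := congrArg Matrix.transpose (h.transpose_mul_chain hl hlL)
  simp only [Matrix.transpose_mul, Matrix.transpose_transpose] at hleft hright
  calc (U l)ᵀ * lossGrad W Φ L l * V l
      = ((U l)ᵀ * (chain W (l + 1) L)ᵀ) * (chain W 1 L - Φ)
          * ((chain W 1 (l - 1))ᵀ * V l) := by
        simp only [lossGrad, Matrix.mul_assoc]
    _ = (chain D (l + 1) L)ᵀ * ((U L)ᵀ * (chain W 1 L - Φ) * V 1)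
          * (chain D 1 (l - 1))ᵀ := by
        rw [hleft, hright]
        simp only [Matrix.mul_assoc]
    _ = _ := by rw [hmid, lossGrad]

lemma of_transpose_mul_mul_eq (hU : ∀ k, 1 ≤ k → k ≤ L → (U k)ᵀ * U k = 1 ∧ U k * (U k)ᵀ = 1)
    (hV : ∀ k, 1 ≤ k → k ≤ L → V k * (V k)ᵀ = 1) (hUV : ∀ k, 1 ≤ k → k + 1 ≤ L → V (k + 1) = U k)
    (hD : ∀ k, 1 ≤ k → k ≤ L → (U k)ᵀ * W k * V k = D k) :
    AlignedFactorization W U D V L where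
  eq k hk hkL := by
    rw [← hD k hk hkL, ← Matrix.mul_assoc, ← Matrix.mul_assoc, (hU k hk hkL).2, Matrix.one_mul,
      Matrix.mul_assoc, hV k hk hkL, Matrix.mul_one]
  orthonormal k hk hkL := (hU k hk hkL).1
  link := hUV

end AlignedFactorization

end Chain

section Blocks

variable {r m : ℕ} (A A' : Matrix (Fin (2*r)) (Fin (2*r)) ℝ) (B B' : Matrix (Fin m) (Fin m) ℝ)

@[simp]
lemma blockDiag_castAdd_castAdd (i j : Fin (2*r)) :
    blockDiag r m A B (Fin.castAdd m i) (Fin.castAdd m j) = A i j := by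
  simp [_root_.blockDiag]

@[simp]
lemma blockDiag_castAdd_natAdd (i : Fin (2*r)) (j : Fin m) :
    blockDiag r m A B (Fin.castAdd m i) (Fin.natAdd (2*r) j) = 0 := by
  simp [_root_.blockDiag]

@[simp]
lemma blockDiag_natAdd_castAdd (i : Fin m) (j : Fin (2*r)) :
    blockDiag r m A B (Fin.natAdd (2*r) i) (Fin.castAdd m j) = 0 := by
  simp [_root_.blockDiag]

@[simp]
lemma blockDiag_natAdd_natAdd (i j : Fin m) :
    blockDiag r m A B (Fin.natAdd (2*r) i) (Fin.natAdd (2*r) j) = B i j := by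
  simp [_root_.blockDiag]

lemma blockDiag_one : blockDiag r m 1 1 = 1 := by
  simp [_root_.blockDiag, Matrix.fromBlocks_one]

lemma blockDiag_mul :
    blockDiag r m A B * blockDiag r m A' B' = blockDiag r m (A * A') (B * B') := by
  simp [_root_.blockDiag, Matrix.submatrix_mul_equiv, Matrix.fromBlocks_multiply]

lemma blockDiag_transpose : (blockDiag r m A B)ᵀ = blockDiag r m Aᵀ Bᵀ := by
  simp [_root_.blockDiag, Matrix.transpose_submatrix, Matrix.fromBlocks_transpose]

lemma chain_blockDiag (A : ℕ → Matrix (Fin (2*r)) (Fin (2*r)) ℝ)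
    (B : ℕ → Matrix (Fin m) (Fin m) ℝ) (i j : ℕ) :
    chain (fun k => blockDiag r m (A k) (B k)) i j = blockDiag r m (chain A i j) (chain B i j) := by
  have hAux : ∀ s, chainAux (fun k => blockDiag r m (A k) (B k)) i s
      = blockDiag r m (chainAux A i s) (chainAux B i s) := by
    intro s
    induction s with
    | zero => exact blockDiag_one.symm
    | succ s ih => rw [chainAux, chainAux, chainAux, ih, blockDiag_mul]
  exact hAux _

lemma mul_blockDiag_mul_transpose (U V : Matrix (Fin (2*r + m)) (Fin (2*r + m)) ℝ) :
    U * blockDiag r m A B * Vᵀ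
      = cols1 r m U * A * (cols1 r m V)ᵀ + cols2 r m U * B * (cols2 r m V)ᵀ := by
  ext a b
  simp [Matrix.mul_apply, Fin.sum_univ_add, cols1, cols2, Finset.sum_add_distrib, add_mul]

lemma transpose_cols2_mul_cols2 {U : Matrix (Fin (2*r + m)) (Fin (2*r + m)) ℝ}
    (hU : Uᵀ * U = 1) : (cols2 r m U)ᵀ * cols2 r m U = 1 := by
  ext i j
  have hij := congrFun (congrFun hU (Fin.natAdd (2*r) i)) (Fin.natAdd (2*r) j)
  simpa [Matrix.mul_apply, cols2, Matrix.one_apply, Fin.natAdd_inj] using hij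

def topLeft (M : Matrix (Fin (2*r + m)) (Fin (2*r + m)) ℝ) : Matrix (Fin (2*r)) (Fin (2*r)) ℝ :=
  M.submatrix (Fin.castAdd m) (Fin.castAdd m)

lemma topLeft_sub (M N : Matrix (Fin (2*r + m)) (Fin (2*r + m)) ℝ) :
    topLeft (M - N) = topLeft M - topLeft N := rfl

lemma topLeft_smul (c : ℝ) (M : Matrix (Fin (2*r + m)) (Fin (2*r + m)) ℝ) :
    topLeft (c • M) = c • topLeft M := rfl

lemma topLeft_blockDiag : topLeft (blockDiag r m A B) = A := by
  ext i j
  simp [topLeft]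

lemma topLeft_blockDiag_mul_mul_blockDiag (M : Matrix (Fin (2*r + m)) (Fin (2*r + m)) ℝ) :
    topLeft (blockDiag r m A B * M * blockDiag r m A' B') = A * topLeft M * A' := by
  ext i j
  simp [topLeft, Matrix.mul_apply, Fin.sum_univ_add]

lemma topLeft_transpose_mul_mul (P Q M : Matrix (Fin (2*r + m)) (Fin (2*r + m)) ℝ) :
    topLeft (Pᵀ * M * Q) = (cols1 r m P)ᵀ * M * cols1 r m Q := by
  ext i j
  simp [topLeft, cols1, Matrix.mul_apply]

lemma topLeft_lossGrad_blockDiag (A : ℕ → Matrix (Fin (2*r)) (Fin (2*r)) ℝ)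
    (B : ℕ → Matrix (Fin m) (Fin m) ℝ) (Ψ : Matrix (Fin (2*r + m)) (Fin (2*r + m)) ℝ)
    (L l : ℕ) :
    topLeft (lossGrad (fun k => blockDiag r m (A k) (B k)) Ψ L l)
      = lossGrad A (topLeft Ψ) L l := by
  rw [lossGrad, chain_blockDiag, chain_blockDiag, chain_blockDiag, blockDiag_transpose,
    blockDiag_transpose, topLeft_blockDiag_mul_mul_blockDiag, topLeft_sub, topLeft_blockDiag,
    lossGrad]

end Blocks

section FrobeniusNorm

variable {p q : Type*} [Fintype p] [Fintype q]

lemma frobSq_smul (c : ℝ) (X : Matrix p q ℝ) : frobSq (c • X) = c ^ 2 * frobSq X := by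
  simp only [frobSq, Matrix.transpose_smul, Matrix.smul_mul, Matrix.mul_smul, smul_smul,
    Matrix.trace_smul, smul_eq_mul, sq]

lemma frobSq_mul_transpose_of_orthonormal [DecidableEq q] {X Y : Matrix p q ℝ}
    (hX : Xᵀ * X = 1) (hY : Yᵀ * Y = 1) : frobSq (X * Yᵀ) = Fintype.card q := by
  calc frobSq (X * Yᵀ) = Matrix.trace (Y * (Xᵀ * X) * Yᵀ) := by
        simp only [frobSq, Matrix.transpose_mul, Matrix.transpose_transpose, Matrix.mul_assoc]
    _ = Matrix.trace (Yᵀ * Y) := by rw [hX, Matrix.mul_one, Matrix.trace_mul_comm]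
    _ = Fintype.card q := by rw [hY, Matrix.trace_one]

end FrobeniusNorm

lemma frobSq_mul_blockDiag_mul_transpose_sub {r m : ℕ}
    {U V : Matrix (Fin (2*r + m)) (Fin (2*r + m)) ℝ} (hU : Uᵀ * U = 1) (hV : Vᵀ * V = 1)
    (A : Matrix (Fin (2*r)) (Fin (2*r)) ℝ) (c : ℝ) :
    frobSq (U * blockDiag r m A (c • 1) * Vᵀ - cols1 r m U * A * (cols1 r m V)ᵀ) = m * c ^ 2 := by
  rw [mul_blockDiag_mul_transpose, add_sub_cancel_left, Matrix.mul_smul, Matrix.mul_one,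
    Matrix.smul_mul, frobSq_smul, frobSq_mul_transpose_of_orthonormal
      (transpose_cols2_mul_cols2 hU) (transpose_cols2_mul_cols2 hV), Fintype.card_fin, mul_comm]

lemma sq_le_sq_of_stepSize {ρ : ℕ → ℕ → ℝ} {ε : ℕ → ℝ} {η lam : ℝ} {L : ℕ}
    (hη : 0 ≤ η) (hlam : 0 ≤ lam) (hρ0 : ∀ l, ρ 0 l = ε l)
    (hρ : ∀ t l, ρ (t + 1) l
      = ρ t l * (1 - η * lam - η * ∏ k ∈ (Finset.Icc 1 L).erase l, (ρ t k) ^ 2))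
    (hstep : ∀ l, 1 ≤ l → l ≤ L →
      η * (lam + ∏ k ∈ (Finset.Icc 1 L).erase l, (ε k) ^ 2) ≤ 1) :
    ∀ t l, 1 ≤ l → l ≤ L → ρ t l ^ 2 ≤ ε l ^ 2 := by
  intro t
  induction t with
  | zero => intro l _ _; rw [hρ0]
  | succ t ih =>
    intro l hl hlL
    set P := ∏ k ∈ (Finset.Icc 1 L).erase l, (ρ t k) ^ 2
    have hP : P ≤ ∏ k ∈ (Finset.Icc 1 L).erase l, (ε k) ^ 2 := by
      refine Finset.prod_le_prod (fun k _ => sq_nonneg _) fun k hk => ?_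
      obtain ⟨hk, hkL⟩ := Finset.mem_Icc.mp (Finset.mem_of_mem_erase hk)
      exact ih k hk hkL
    have hP0 : 0 ≤ P := Finset.prod_nonneg fun k _ => sq_nonneg _
    have hfac0 : 0 ≤ 1 - η * lam - η * P := by nlinarith [hstep l hl hlL]
    have hfac1 : 1 - η * lam - η * P ≤ 1 := by
      nlinarith [mul_nonneg hη hlam, mul_nonneg hη hP0]
    calc ρ (t + 1) l ^ 2 = ρ t l ^ 2 * (1 - η * lam - η * P) ^ 2 := by rw [hρ, mul_pow]
      _ ≤ ρ t l ^ 2 * 1 := by gcongr; exact pow_le_one₀ hfac0 hfac1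
      _ ≤ ε l ^ 2 := by rw [mul_one]; exact ih l hl hlL

end DeepLinearCompression

open DeepLinearCompression

theorem statement1_general
    (r m : ℕ) (L : ℕ) (hL : 1 ≤ L)
    (Φ : Matrix (Fin (2*r + m)) (Fin (2*r + m)) ℝ)
    (ε : ℕ → ℝ)
    (η lam : ℝ) (hη : 0 < η) (hlam : 0 ≤ lam)
    (W : ℕ → ℕ → Matrix (Fin (2*r + m)) (Fin (2*r + m)) ℝ)
    (hWupd : ∀ t l, 1 ≤ l → l ≤ L →
      W (t+1) l = (1 - η * lam) • W t l
        - η • ((chain (W t) (l+1) L)ᵀ * (chain (W t) 1 L - Φ) * (chain (W t) 1 (l-1))ᵀ))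
    (ρ : ℕ → ℕ → ℝ)
    (hρ0 : ∀ l, ρ 0 l = ε l)
    (hρ : ∀ t l, ρ (t+1) l
      = ρ t l * (1 - η * lam - η * ∏ k ∈ (Finset.Icc 1 L).erase l, (ρ t k)^2))
    -- the block-diagonal decomposition hypothesis
    (U V : ℕ → Matrix (Fin (2*r + m)) (Fin (2*r + m)) ℝ)
    (hU : ∀ l, 1 ≤ l → l ≤ L → ((U l)ᵀ * U l = 1 ∧ U l * (U l)ᵀ = 1))
    (hV : ∀ l, 1 ≤ l → l ≤ L → ((V l)ᵀ * V l = 1 ∧ V l * (V l)ᵀ = 1))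
    (hUV : ∀ l, 1 ≤ l → l + 1 ≤ L → V (l+1) = U l)
    (Wtil : ℕ → ℕ → Matrix (Fin (2*r)) (Fin (2*r)) ℝ)
    (hdecomp : ∀ t l, 1 ≤ l → l ≤ L →
      (U l)ᵀ * W t l * V l = blockDiag r m (Wtil t l) (ρ t l • 1))
    (hWtil0 : ∀ l, 1 ≤ l → l ≤ L → Wtil 0 l = ε l • 1)
    -- the compressed iterates
    (What : ℕ → ℕ → Matrix (Fin (2*r)) (Fin (2*r)) ℝ)
    (hWhat0 : ∀ l, 1 ≤ l → l ≤ L → What 0 l = ε l • 1)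
    (hWhatupd : ∀ t l, 1 ≤ l → l ≤ L →
      What (t+1) l = (1 - η * lam) • What t l
        - η • ((chain (What t) (l+1) L)ᵀ
            * (chain (What t) 1 L - (cols1 r m (U L))ᵀ * Φ * cols1 r m (V 1))
            * (chain (What t) 1 (l-1))ᵀ))
    -- step-size condition
    (hstep : ∀ l, 1 ≤ l → l ≤ L →
      η * (lam + ∏ k ∈ (Finset.Icc 1 L).erase l, (ε k)^2) ≤ 1) :
    ∀ t : ℕ,
      frobSq (chain (W t) 1 L - cols1 r m (U L) * chain (What t) 1 L * (cols1 r m (V 1))ᵀ)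
        ≤ (m : ℝ) * ∏ l ∈ Finset.Icc 1 L, (ε l)^2 := by
  have hfac : ∀ t,
      AlignedFactorization (W t) U (fun l => blockDiag r m (Wtil t l) (ρ t l • 1)) V L :=
    fun t => .of_transpose_mul_mul_eq hU (fun l hl hlL => (hV l hl hlL).2) hUV (hdecomp t)
  -- The top-left blocks of `Uᵀ W V` obey the compressed update, so they coincide with `What`.
  have hWtil : ∀ t l, 1 ≤ l → l ≤ L → Wtil t l = What t l := by
    refine gradientDescent_unique ?_ hWhatupd
      fun l hl hlL => (hWtil0 l hl hlL).trans (hWhat0 l hl hlL).symm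
    intro t l hl hlL
    have hupd : W (t + 1) l = (1 - η * lam) • W t l - η • lossGrad (W t) Φ L l :=
      hWupd t l hl hlL
    rw [← topLeft_blockDiag (Wtil (t + 1) l) (ρ (t + 1) l • 1), ← hdecomp (t + 1) l hl hlL,
      hupd, Matrix.mul_sub, Matrix.sub_mul, Matrix.mul_smul, Matrix.smul_mul, Matrix.mul_smul,
      Matrix.smul_mul, hdecomp t l hl hlL, (hfac t).lossGrad_eq (hV 1 le_rfl hL).1 Φ hl hlL,
      topLeft_sub, topLeft_smul, topLeft_smul, topLeft_blockDiag, topLeft_lossGrad_blockDiag,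
      topLeft_transpose_mul_mul]
  intro t
  rw [(hfac t).chain_eq le_rfl hL le_rfl, chain_blockDiag, chain_smul_one,
    chain_congr fun k hk hkL => hWtil t k hk hkL, frobSq_mul_blockDiag_mul_transpose_sub
      (hU L hL le_rfl).1 (hV 1 le_rfl hL).1, ← Finset.prod_pow]
  refine mul_le_mul_of_nonneg_left (Finset.prod_le_prod (fun k _ => sq_nonneg _) fun k hk => ?_)
    m.cast_nonneg
  obtain ⟨hk, hkL⟩ := Finset.mem_Icc.mp hk
  exact sq_le_sq_of_stepSize hη.le hlam hρ0 hρ hstep t k hk hkL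

/-- Proposition 1: the compressed trajectory stays within
`√(m·∏ εₗ²)` of the original end-to-end trajectory (in squared Frobenius norm). -/
theorem statement1
    (r m : ℕ) (hm : 0 < m) (L : ℕ) (hL : 1 ≤ L)
    (Φ : Matrix (Fin (2*r + m)) (Fin (2*r + m)) ℝ) (hΦ : Φ.rank ≤ r)
    (ε : ℕ → ℝ) (hε : ∀ l, 1 ≤ l → l ≤ L → 0 < ε l)
    (η lam : ℝ) (hη : 0 < η) (hlam : 0 ≤ lam)
    (W : ℕ → ℕ → Matrix (Fin (2*r + m)) (Fin (2*r + m)) ℝ)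
    (hW0 : ∀ l, 1 ≤ l → l ≤ L →
      W 0 l * (W 0 l)ᵀ = (ε l)^2 • (1 : Matrix (Fin (2*r + m)) (Fin (2*r + m)) ℝ) ∧
      (W 0 l)ᵀ * W 0 l = (ε l)^2 • (1 : Matrix (Fin (2*r + m)) (Fin (2*r + m)) ℝ))
    (hWupd : ∀ t l, 1 ≤ l → l ≤ L →
      W (t+1) l = (1 - η * lam) • W t l
        - η • ((chain (W t) (l+1) L)ᵀ * (chain (W t) 1 L - Φ) * (chain (W t) 1 (l-1))ᵀ))
    (ρ : ℕ → ℕ → ℝ)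
    (hρ0 : ∀ l, ρ 0 l = ε l)
    (hρ : ∀ t l, ρ (t+1) l
      = ρ t l * (1 - η * lam - η * ∏ k ∈ (Finset.Icc 1 L).erase l, (ρ t k)^2))
    -- the block-diagonal decomposition hypothesis
    (U V : ℕ → Matrix (Fin (2*r + m)) (Fin (2*r + m)) ℝ)
    (hU : ∀ l, 1 ≤ l → l ≤ L → ((U l)ᵀ * U l = 1 ∧ U l * (U l)ᵀ = 1))
    (hV : ∀ l, 1 ≤ l → l ≤ L → ((V l)ᵀ * V l = 1 ∧ V l * (V l)ᵀ = 1))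
    (hUV : ∀ l, 1 ≤ l → l + 1 ≤ L → V (l+1) = U l)
    (Wtil : ℕ → ℕ → Matrix (Fin (2*r)) (Fin (2*r)) ℝ)
    (hdecomp : ∀ t l, 1 ≤ l → l ≤ L →
      (U l)ᵀ * W t l * V l = blockDiag r m (Wtil t l) (ρ t l • 1))
    (hWtil0 : ∀ l, 1 ≤ l → l ≤ L → Wtil 0 l = ε l • 1)
    -- the compressed iterates
    (What : ℕ → ℕ → Matrix (Fin (2*r)) (Fin (2*r)) ℝ)
    (hWhat0 : ∀ l, 1 ≤ l → l ≤ L → What 0 l = ε l • 1)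
    (hWhatupd : ∀ t l, 1 ≤ l → l ≤ L →
      What (t+1) l = (1 - η * lam) • What t l
        - η • ((chain (What t) (l+1) L)ᵀ
            * (chain (What t) 1 L - (cols1 r m (U L))ᵀ * Φ * cols1 r m (V 1))
            * (chain (What t) 1 (l-1))ᵀ))
    -- step-size condition
    (hstep : ∀ l, 1 ≤ l → l ≤ L →
      η * (lam + ∏ k ∈ (Finset.Icc 1 L).erase l, (ε k)^2) ≤ 1) :
    ∀ t : ℕ,
      frobSq (chain (W t) 1 L - cols1 r m (U L) * chain (What t) 1 L * (cols1 r m (V 1))ᵀ)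
        ≤ (m : ℝ) * ∏ l ∈ Finset.Icc 1 L, (ε l)^2 :=
  statement1_general r m L hL Φ ε η lam hη hlam W hWupd ρ hρ0 hρ U V hU hV hUV Wtil hdecomp hWtil0
    What hWhat0 hWhatupd hstep
end
end

section
/- Let the initial weights W_l(0) follow scaled-orthogonal initialization as in the context, with rank(Φ) ≤ r and m := d − 2r > 0. Then there exist orthonormal families {v_i}_{i=1}^m and {u_i}_{i=1}^m in ℝ^d such that for every i ∈ {1,…,m}: W_1(0)·v_i = ε_1·u_i, W_1(0)ᵀ·u_i = ε_1·v_i, Φᵀ·(W_L(0)·W_{L−1}(0)⋯W_2(0))·u_i = 0, and Φ·v_i = 0. -/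
/-!
With `C = W_L ⋯ W_2`, the matrix `Φᵀ C W₁` has rank at most `rank Φ ≤ r`, so the subspace
`ker Φ ∩ ker (Φᵀ C W₁)` has dimension at least `d - 2r = m`. Take `v` orthonormal in it and
`u_i = ε₁⁻¹ W₁ v_i`: since `W₁ᵀ W₁ = ε₁² I`, the family `u` is orthonormal and `W₁ᵀ u_i = ε₁ v_i`,
while `Φᵀ C u_i = ε₁⁻¹ Φᵀ C W₁ v_i = 0`.
-/

open Matrix BigOperators Filter

noncomputable section

lemma Matrix.card_le_rank_add_rank_add_finrank_ker_inf {K : Type*} [Field K]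
    {n p q : Type*} [Fintype n]
    (A : Matrix p n K) (B : Matrix q n K) :
    Fintype.card n ≤ A.rank + B.rank +
      Module.finrank K (LinearMap.ker A.mulVecLin ⊓ LinearMap.ker B.mulVecLin :
        Submodule K (n → K)) := by
  have hA := LinearMap.finrank_range_add_finrank_ker A.mulVecLin
  have hB := LinearMap.finrank_range_add_finrank_ker B.mulVecLin
  have hsup := Submodule.finrank_sup_add_finrank_inf_eq
    (LinearMap.ker A.mulVecLin) (LinearMap.ker B.mulVecLin)
  have hle := Submodule.finrank_le (LinearMap.ker A.mulVecLin ⊔ LinearMap.ker B.mulVecLin)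
  simp only [Module.finrank_fintype_fun_eq_card] at hA hB hle
  rw [Matrix.rank, Matrix.rank]
  omega

lemma Submodule.exists_dotProduct_orthonormal_of_le_finrank {ι : Type*} [Fintype ι]
    (S : Submodule ℝ (ι → ℝ)) {k : ℕ} (hk : k ≤ Module.finrank ℝ S) :
    ∃ v : Fin k → ι → ℝ, (∀ i, v i ∈ S) ∧ ∀ i j, v i ⬝ᵥ v j = if i = j then 1 else 0 := by
  let e := (WithLp.linearEquiv 2 ℝ (ι → ℝ)).symm
  have hk' : k ≤ Module.finrank ℝ (S.map (e : (ι → ℝ) →ₗ[ℝ] EuclideanSpace ℝ ι)) := by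
    rwa [← (e.submoduleMap S).finrank_eq]
  let b := stdOrthonormalBasis ℝ (S.map (e : (ι → ℝ) →ₗ[ℝ] EuclideanSpace ℝ ι))
  have hb : Orthonormal ℝ (fun i : Fin k => (b (Fin.castLE hk' i) : EuclideanSpace ℝ ι)) :=
    (b.orthonormal.comp _ (Fin.castLE_injective _)).comp_linearIsometry (Submodule.subtypeₗᵢ _)
  refine ⟨fun i => WithLp.ofLp (b (Fin.castLE hk' i) : EuclideanSpace ℝ ι), fun i => ?_,
    fun i j => ?_⟩
  · exact (Submodule.mem_map_equiv _).mp (b _).2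
  · rw [← orthonormal_iff_ite.mp hb i j, EuclideanSpace.inner_eq_star_dotProduct, star_trivial,
      dotProduct_comm]

section ScaledIsometry

variable {n : Type*} [Fintype n] [DecidableEq n] {W : Matrix n n ℝ} {c : ℝ}

lemma Matrix.mulVec_dotProduct_mulVec_of_transpose_mul_self (hW : Wᵀ * W = c ^ 2 • 1)
    (x y : n → ℝ) : (W *ᵥ x) ⬝ᵥ (W *ᵥ y) = c ^ 2 * (x ⬝ᵥ y) := by
  rw [dotProduct_mulVec, ← vecMul_transpose, vecMul_vecMul, hW, vecMul_smul, vecMul_one,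
    smul_dotProduct, smul_eq_mul]

lemma Matrix.inv_smul_mulVec_dotProduct_inv_smul_mulVec (hW : Wᵀ * W = c ^ 2 • 1) (hc : c ≠ 0)
    (x y : n → ℝ) : (c⁻¹ • W *ᵥ x) ⬝ᵥ (c⁻¹ • W *ᵥ y) = x ⬝ᵥ y := by
  rw [smul_dotProduct, dotProduct_smul, mulVec_dotProduct_mulVec_of_transpose_mul_self hW,
    smul_eq_mul, smul_eq_mul]
  field_simp

lemma Matrix.transpose_mulVec_inv_smul_mulVec (hW : Wᵀ * W = c ^ 2 • 1) (hc : c ≠ 0)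
    (x : n → ℝ) : Wᵀ *ᵥ (c⁻¹ • W *ᵥ x) = c • x := by
  rw [mulVec_smul, mulVec_mulVec, hW, smul_mulVec, one_mulVec, smul_smul]
  congr 1
  field_simp

end ScaledIsometry

/-- `W l` stands for `W_l(0)`, and `d = 2r + m`. -/
theorem statement5_general
    (r m : ℕ) (L : ℕ) (hL : 1 ≤ L)
    (Φ : Matrix (Fin (2*r + m)) (Fin (2*r + m)) ℝ) (hΦ : Φ.rank ≤ r)
    (ε : ℕ → ℝ) (hε : ∀ l, 1 ≤ l → l ≤ L → 0 < ε l)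
    (W : ℕ → Matrix (Fin (2*r + m)) (Fin (2*r + m)) ℝ)
    (hW0 : ∀ l, 1 ≤ l → l ≤ L →
      W l * (W l)ᵀ = (ε l)^2 • (1 : Matrix (Fin (2*r + m)) (Fin (2*r + m)) ℝ) ∧
      (W l)ᵀ * W l = (ε l)^2 • (1 : Matrix (Fin (2*r + m)) (Fin (2*r + m)) ℝ)) :
    ∃ u v : Fin m → (Fin (2*r + m) → ℝ),
      (∀ i j, u i ⬝ᵥ u j = if i = j then (1:ℝ) else 0) ∧
      (∀ i j, v i ⬝ᵥ v j = if i = j then (1:ℝ) else 0) ∧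
      (∀ i,
        (W 1) *ᵥ (v i) = ε 1 • u i ∧
        (W 1)ᵀ *ᵥ (u i) = ε 1 • v i ∧
        Φᵀ *ᵥ ((chain W 2 L) *ᵥ (u i)) = 0 ∧
        Φ *ᵥ (v i) = 0) := by
  have hε1 : ε 1 ≠ 0 := (hε 1 le_rfl hL).ne'
  have hW1 := (hW0 1 le_rfl hL).2
  set B := Φᵀ * chain W 2 L * W 1
  have hB : B.rank ≤ r :=
    calc B.rank ≤ Φᵀ.rank := (rank_mul_le_left _ _).trans (rank_mul_le_left _ _)
      _ = Φ.rank := rank_transpose Φ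
      _ ≤ r := hΦ
  have hdim : m ≤ Module.finrank ℝ
      (LinearMap.ker Φ.mulVecLin ⊓ LinearMap.ker B.mulVecLin : Submodule ℝ _) := by
    have := Φ.card_le_rank_add_rank_add_finrank_ker_inf B
    rw [Fintype.card_fin] at this
    omega
  obtain ⟨v, hvker, hv⟩ := Submodule.exists_dotProduct_orthonormal_of_le_finrank _ hdim
  refine ⟨fun i => (ε 1)⁻¹ • W 1 *ᵥ v i, v, fun i j => ?_, hv, fun i =>
    ⟨(smul_inv_smul₀ hε1 _).symm, transpose_mulVec_inv_smul_mulVec hW1 hε1 _, ?_, (hvker i).1⟩⟩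
  · rw [inv_smul_mulVec_dotProduct_inv_smul_mulVec hW1 hε1, hv]
  · have hBv : B *ᵥ v i = 0 := (hvker i).2
    rw [mulVec_smul, mulVec_smul, mulVec_mulVec, mulVec_mulVec, hBv, smul_zero]

/-- base case of Lemma 1: construction of the orthonormal families
at initialization for the first layer. Here `W l` denotes `W_l(0)` and `d = 2r + m`. -/
theorem statement5
    (r m : ℕ) (hm : 0 < m) (L : ℕ) (hL : 1 ≤ L)
    (Φ : Matrix (Fin (2*r + m)) (Fin (2*r + m)) ℝ) (hΦ : Φ.rank ≤ r)
    (ε : ℕ → ℝ) (hε : ∀ l, 1 ≤ l → l ≤ L → 0 < ε l)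
    (W : ℕ → Matrix (Fin (2*r + m)) (Fin (2*r + m)) ℝ)
    (hW0 : ∀ l, 1 ≤ l → l ≤ L →
      W l * (W l)ᵀ = (ε l)^2 • (1 : Matrix (Fin (2*r + m)) (Fin (2*r + m)) ℝ) ∧
      (W l)ᵀ * W l = (ε l)^2 • (1 : Matrix (Fin (2*r + m)) (Fin (2*r + m)) ℝ)) :
    ∃ u v : Fin m → (Fin (2*r + m) → ℝ),
      (∀ i j, u i ⬝ᵥ u j = if i = j then (1:ℝ) else 0) ∧
      (∀ i j, v i ⬝ᵥ v j = if i = j then (1:ℝ) else 0) ∧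
      (∀ i,
        (W 1) *ᵥ (v i) = ε 1 • u i ∧
        (W 1)ᵀ *ᵥ (u i) = ε 1 • v i ∧
        Φᵀ *ᵥ ((chain W 2 L) *ᵥ (u i)) = 0 ∧
        Φ *ᵥ (v i) = 0) :=
  statement5_general r m L hL Φ hΦ ε hε W hW0
end
end

section
/- Suppose η·(λ + ∏_{k≠l} ε_k²) ≤ 1 for every l ∈ {1,…,L}. Then for every l ∈ {1,…,L} and every t ≥ 0: 0 ≤ ρ_l(t+1) ≤ ρ_l(t) ≤ ε_l. -/
/-!
The invariant is `0 ≤ ρ_k(t) ≤ ε_k` for every layer `k`. Under it the product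
`∏_{k≠l} ρ_k(t)²` lies between `0` and `∏_{k≠l} ε_k²`, so the step-size condition puts the
factor `1 - ηλ - η ∏_{k≠l} ρ_k(t)²` in `[0, 1]`; hence `0 ≤ ρ_l(t+1) ≤ ρ_l(t)`, which
propagates the invariant.
-/

open Matrix BigOperators Filter

noncomputable section

namespace DampedIteration

variable {ι : Type*} [DecidableEq ι] {s : Finset ι} {ε : ι → ℝ} {η lam : ℝ} {ρ : ℕ → ι → ℝ}

lemma one_sub_damping_mem_Icc {p q : ℝ} (hη : 0 ≤ η) (hlam : 0 ≤ lam) (hp : 0 ≤ p)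
    (hpq : p ≤ q) (hstep : η * (lam + q) ≤ 1) :
    1 - η * lam - η * p ∈ Set.Icc 0 1 := by
  constructor
  · nlinarith [mul_le_mul_of_nonneg_left hpq hη]
  · nlinarith [mul_nonneg hη hlam, mul_nonneg hη hp]

lemma prod_erase_sq_le {t : ℕ} (hρt : ∀ k ∈ s, ρ t k ∈ Set.Icc 0 (ε k)) (l : ι) :
    ∏ k ∈ s.erase l, ρ t k ^ 2 ≤ ∏ k ∈ s.erase l, ε k ^ 2 :=
  Finset.prod_le_prod (fun _ _ => sq_nonneg _) fun k hk =>
    have hk := hρt k (Finset.mem_of_mem_erase hk)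
    pow_le_pow_left₀ hk.1 hk.2 2

variable (hη : 0 ≤ η) (hlam : 0 ≤ lam)
  (hρ : ∀ t, ∀ l ∈ s, ρ (t + 1) l
    = ρ t l * (1 - η * lam - η * ∏ k ∈ s.erase l, ρ t k ^ 2))
  (hstep : ∀ l ∈ s, η * (lam + ∏ k ∈ s.erase l, ε k ^ 2) ≤ 1)
include hη hlam hρ hstep

lemma succ_mem_Icc_of_forall_mem_Icc {t : ℕ} (hρt : ∀ k ∈ s, ρ t k ∈ Set.Icc 0 (ε k))
    {l : ι} (hl : l ∈ s) : ρ (t + 1) l ∈ Set.Icc 0 (ρ t l) := by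
  obtain ⟨hc₀, hc₁⟩ := one_sub_damping_mem_Icc hη hlam
    (Finset.prod_nonneg fun _ _ => sq_nonneg _) (prod_erase_sq_le hρt l) (hstep l hl)
  rw [hρ t l hl]
  exact ⟨mul_nonneg (hρt l hl).1 hc₀, mul_le_of_le_one_right (hρt l hl).1 hc₁⟩

lemma forall_mem_Icc_zero_init (hρ0 : ∀ l ∈ s, ρ 0 l = ε l) (hε : ∀ l ∈ s, 0 ≤ ε l) (t : ℕ) :
    ∀ l ∈ s, ρ t l ∈ Set.Icc 0 (ε l) := by
  induction t with
  | zero => exact fun l hl => ⟨hρ0 l hl ▸ hε l hl, (hρ0 l hl).le⟩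
  | succ t ih =>
    intro l hl
    have h := succ_mem_Icc_of_forall_mem_Icc hη hlam hρ hstep ih hl
    exact ⟨h.1, h.2.trans (ih l hl).2⟩

end DampedIteration

theorem statement13_general
    (L : ℕ)
    (ε : ℕ → ℝ) (hε : ∀ l, 1 ≤ l → l ≤ L → 0 < ε l)
    (η lam : ℝ) (hη : 0 < η) (hlam : 0 ≤ lam)
    (ρ : ℕ → ℕ → ℝ)
    (hρ0 : ∀ l, ρ 0 l = ε l)
    (hρ : ∀ t l, ρ (t+1) l
      = ρ t l * (1 - η * lam - η * ∏ k ∈ (Finset.Icc 1 L).erase l, (ρ t k)^2))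
    (hstep : ∀ l, 1 ≤ l → l ≤ L →
      η * (lam + ∏ k ∈ (Finset.Icc 1 L).erase l, (ε k)^2) ≤ 1) :
    ∀ l, 1 ≤ l → l ≤ L → ∀ t : ℕ,
      0 ≤ ρ (t+1) l ∧ ρ (t+1) l ≤ ρ t l ∧ ρ t l ≤ ε l := by
  intro l h1 h2 t
  have hl : l ∈ Finset.Icc 1 L := Finset.mem_Icc.2 ⟨h1, h2⟩
  have hstep' : ∀ l ∈ Finset.Icc 1 L, η * (lam + ∏ k ∈ (Finset.Icc 1 L).erase l, ε k ^ 2) ≤ 1 :=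
    fun l hl => hstep l (Finset.mem_Icc.1 hl).1 (Finset.mem_Icc.1 hl).2
  have hε' : ∀ l ∈ Finset.Icc 1 L, 0 ≤ ε l :=
    fun l hl => (hε l (Finset.mem_Icc.1 hl).1 (Finset.mem_Icc.1 hl).2).le
  have hρt := DampedIteration.forall_mem_Icc_zero_init hη.le hlam (fun t l _ => hρ t l)
    hstep' (fun l _ => hρ0 l) hε' t
  have hsucc := DampedIteration.succ_mem_Icc_of_forall_mem_Icc hη.le hlam
    (fun t l _ => hρ t l) hstep' hρt hl
  exact ⟨hsucc.1, hsucc.2, (hρt l hl).2⟩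

/-- if `η·(λ + ∏_{k≠l} ε_k²) ≤ 1` for every layer `l`, then each
sequence `ρ_l(t)` is nonnegative, nonincreasing, and bounded above by `ε_l`. -/
theorem statement13
    (L : ℕ) (hL : 1 ≤ L)
    (ε : ℕ → ℝ) (hε : ∀ l, 1 ≤ l → l ≤ L → 0 < ε l)
    (η lam : ℝ) (hη : 0 < η) (hlam : 0 ≤ lam)
    (ρ : ℕ → ℕ → ℝ)
    (hρ0 : ∀ l, ρ 0 l = ε l)
    (hρ : ∀ t l, ρ (t+1) l
      = ρ t l * (1 - η * lam - η * ∏ k ∈ (Finset.Icc 1 L).erase l, (ρ t k)^2))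
    (hstep : ∀ l, 1 ≤ l → l ≤ L →
      η * (lam + ∏ k ∈ (Finset.Icc 1 L).erase l, (ε k)^2) ≤ 1) :
    ∀ l, 1 ≤ l → l ≤ L → ∀ t : ℕ,
      0 ≤ ρ (t+1) l ∧ ρ (t+1) l ≤ ρ t l ∧ ρ t l ≤ ε l :=
  statement13_general L ε hε η lam hη hlam ρ hρ0 hρ hstep
end
end
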